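/- Let p be an odd prime and G cyclic of order p. If M is a Z_p[G]-module sitting in a nonsplit extension 0 -> Z_p[G] -> M -> Z/pZ -> 0 (with trivial G-action on Z/pZ), then M is isomorphic to Z_p + A as a Z_p[G]-module, where A is the augmentation kernel. -/

import Mathlib

/-!
Write `P = ℤ_p[G]`, `σ` for the shift on `P` and `N = ∑ Tᵏ` for the norm of `T`. The projection
`π` kills both `T - 1` and `N`, so both factor through `ι`: there are linear maps `F, G : M → P`
with `ι ∘ F = N` and `ι ∘ G = T - 1`. `G` takes values in the augmentation kernel `A` and
intertwines `T` with `σ`, while `F x` is `σ`-invariant, hence constant. So `x ↦ (F x 0, G x)` is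
an equivariant map `M → ℤ_p × A`.

Nonsplitness enters in one form only: a `T`-fixed element `t` with `p • t = 0` is zero, since
otherwise `π t ≠ 0` and `y ↦ y (π t)⁻¹ t` is an equivariant section. This gives injectivity. It
also shows that a `T`-fixed lift of `1 ∈ ℤ/p` (which exists because `A = (σ - 1) P`) can be
rescaled to an `m` with `p • m = ι 1`, the norm element of `P`; then `F m = 1` and `G m = 0`,
which together with `G ∘ ι = σ - 1` gives surjectivity.
-/

open Finset

def CyclicIso (R : Type*) [CommRing R] {M N : Type*} [AddCommGroup M] [Module R M]
    [AddCommGroup N] [Module R N] (T : Module.End R M) (S : Module.End R N) : Prop :=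
  ∃ e : M ≃ₗ[R] N, ∀ x, e (T x) = S (e x)

-- `ℤ_p[G]` is realised as `ZMod p → ℤ_[p]`, the generator of `G` acting by the shift.
noncomputable def shiftEnd (p : ℕ) [Fact p.Prime] :
    Module.End ℤ_[p] (ZMod p → ℤ_[p]) :=
  LinearMap.funLeft ℤ_[p] ℤ_[p] (fun i => i - 1)

noncomputable def augSum (p : ℕ) [Fact p.Prime] :
    (ZMod p → ℤ_[p]) →ₗ[ℤ_[p]] ℤ_[p] :=
  ∑ i : ZMod p, LinearMap.proj i

noncomputable def augIdeal (p : ℕ) [Fact p.Prime] :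
    Submodule ℤ_[p] (ZMod p → ℤ_[p]) :=
  LinearMap.ker (augSum p)

open Function PadicInt

lemma geom_sum_mul_eq_of_pow_eq_one {R : Type*} [Ring R] {x : R} {n : ℕ} (h : x ^ n = 1) :
    (∑ i ∈ range n, x ^ i) * x = ∑ i ∈ range n, x ^ i := by
  have := geom_sum_mul x n
  rwa [h, sub_self, mul_sub, mul_one, sub_eq_zero] at this

lemma mul_geom_sum_eq_of_pow_eq_one {R : Type*} [Ring R] {x : R} {n : ℕ} (h : x ^ n = 1) :
    x * ∑ i ∈ range n, x ^ i = ∑ i ∈ range n, x ^ i := by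
  have := mul_geom_sum x n
  rwa [h, sub_self, sub_mul, one_mul, sub_eq_zero] at this

lemma Module.End.pow_apply_sub_mem_range_sub_one {R M : Type*} [Semiring R] [AddCommGroup M]
    [Module R M] (f : Module.End R M) (n : ℕ) (x : M) :
    (f ^ n) x - x ∈ LinearMap.range (f - 1) :=
  ⟨(∑ i ∈ range n, f ^ i) x, by rw [← Module.End.mul_apply, mul_geom_sum]; rfl⟩

lemma Module.End.sum_pow_apply_of_apply_eq {R M : Type*} [Semiring R] [AddCommMonoid M]
    [Module R M] {T : Module.End R M} {x : M} (hx : T x = x) (n : ℕ) :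
    (∑ k ∈ range n, T ^ k) x = n • x := by
  simp [LinearMap.sum_apply, Module.End.pow_apply, iterate_fixed hx]

lemma LinearMap.map_sum_pow_apply {R P M : Type*} [Semiring R] [AddCommMonoid P] [AddCommMonoid M]
    [Module R P] [Module R M] {ι : P →ₗ[R] M} {σ : Module.End R P} {T : Module.End R M}
    (h : ∀ x, ι (σ x) = T (ι x)) (n : ℕ) (x : P) :
    ι ((∑ k ∈ Finset.range n, σ ^ k) x) = (∑ k ∈ Finset.range n, T ^ k) (ι x) := by
  have hpow := Module.End.commute_pow_left_of_commute (f := ι) (LinearMap.ext fun x => (h x).symm)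
  rw [LinearMap.sum_apply, LinearMap.sum_apply, map_sum]
  exact sum_congr rfl fun k _ => (LinearMap.congr_fun (hpow k) x).symm

lemma LinearMap.exists_comp_eq_of_injective {R P M N : Type*} [Semiring R] [AddCommMonoid P]
    [AddCommMonoid M] [AddCommMonoid N] [Module R P] [Module R M] [Module R N]
    {ι : P →ₗ[R] M} (hι : Injective ι) (φ : N →ₗ[R] M) (h : ∀ x, φ x ∈ LinearMap.range ι) :
    ∃ ψ : N →ₗ[R] P, ∀ x, ι (ψ x) = φ x :=
  ⟨(LinearEquiv.ofInjective ι hι).symm ∘ₗ φ.codRestrict _ h,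
    fun x => LinearEquiv.ofInjective_symm_apply (f := ι) (h := hι) ⟨φ x, h x⟩⟩

lemma Finset.sum_range_natCast_zmod {M : Type*} [AddCommMonoid M] (n : ℕ) [NeZero n]
    (g : ZMod n → M) : ∑ k ∈ range n, g k = ∑ j, g j :=
  Finset.sum_nbij' (fun k => (k : ZMod n)) ZMod.val (by simp) (by simp [ZMod.val_lt])
    (fun k hk => ZMod.val_cast_of_lt (mem_range.mp hk)) (fun j _ => ZMod.natCast_zmod_val j)
    (fun _ _ => rfl)

section GroupRing

variable {p : ℕ} [Fact p.Prime]

lemma shiftEnd_pow_apply (k : ℕ) (x : ZMod p → ℤ_[p]) (i : ZMod p) :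
    (shiftEnd p ^ k) x i = x (i - k) := by
  induction k generalizing i with
  | zero => simp
  | succ k ih =>
    rw [pow_succ', Module.End.mul_apply]
    show (shiftEnd p ^ k) x (i - 1) = _
    rw [ih]
    congr 1
    push_cast
    ring

lemma eq_const_of_shiftEnd_eq {x : ZMod p → ℤ_[p]} (hx : shiftEnd p x = x) :
    x = fun _ => x 0 := by
  funext i
  have hfix : (shiftEnd p ^ i.val) x = x := by
    rw [Module.End.pow_apply]
    exact iterate_fixed hx _
  conv_lhs => rw [← hfix, shiftEnd_pow_apply, ZMod.natCast_zmod_val, sub_self]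

lemma sum_shiftEnd_pow_apply (x : ZMod p → ℤ_[p]) :
    (∑ k ∈ range p, shiftEnd p ^ k) x = fun _ => augSum p x := by
  funext i
  simp only [LinearMap.sum_apply, Finset.sum_apply, shiftEnd_pow_apply, augSum,
    LinearMap.proj_apply]
  rw [sum_range_natCast_zmod p (fun k => x (i - k))]
  exact Fintype.sum_equiv (Equiv.subLeft i) _ _ fun _ => rfl

lemma shiftEnd_pow_val_single (i : ZMod p) :
    (shiftEnd p ^ i.val) (Pi.single 0 1) = Pi.single i 1 := by
  funext j
  rw [shiftEnd_pow_apply, ZMod.natCast_zmod_val]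
  simp [Pi.single_apply, sub_eq_zero]

lemma augIdeal_le_range_shiftEnd_sub_one :
    augIdeal p ≤ LinearMap.range (shiftEnd p - 1) := by
  intro x hx
  have hsum : ∑ i, x i = 0 := by simpa [augIdeal, augSum] using hx
  have hx : x = ∑ i, x i • ((shiftEnd p ^ i.val) (Pi.single 0 1) - Pi.single 0 1) := by
    simp only [smul_sub, sum_sub_distrib, ← sum_smul, hsum, zero_smul, sub_zero,
      shiftEnd_pow_val_single]
    exact pi_eq_sum_univ' x
  rw [hx]
  exact Submodule.sum_mem _ fun i _ =>
    Submodule.smul_mem _ _ (Module.End.pow_apply_sub_mem_range_sub_one _ _ _)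

end GroupRing

lemma PadicInt.smul_eq_smul_of_toZMod_eq {p : ℕ} [Fact p.Prime] {M : Type*} [AddCommGroup M]
    [Module ℤ_[p] M] {t : M} (ht : p • t = 0) {a b : ℤ_[p]} (h : toZMod a = toZMod b) :
    a • t = b • t := by
  have hmem : a - b ∈ Ideal.span {(p : ℤ_[p])} := by
    rw [← maximalIdeal_eq_span_p, ← ker_toZMod, RingHom.mem_ker, map_sub, h, sub_self]
  obtain ⟨c, hc⟩ := Ideal.mem_span_singleton'.mp hmem
  rw [← sub_eq_zero, ← sub_smul, ← hc, mul_smul, Nat.cast_smul_eq_nsmul, ht, smul_zero]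

section Extension

variable {p : ℕ} [Fact p.Prime] {M : Type*} [AddCommGroup M] [Module ℤ_[p] M]
  {T : Module.End ℤ_[p] M} {ι : (ZMod p → ℤ_[p]) →ₗ[ℤ_[p]] M} {π : M →+ ZMod p}

lemma exists_section_of_fixed_of_nsmul_eq_zero
    (hπs : ∀ (c : ℤ_[p]) (x : M), π (c • x) = toZMod c * π x)
    {t : M} (hTt : T t = t) (hpt : p • t = 0) (hπt : π t ≠ 0) :
    ∃ s : ZMod p →+ M, (∀ y, π (s y) = y) ∧ (∀ y, T (s y) = s y) ∧
      ∀ (c : ℤ_[p]) (y : ZMod p), s (toZMod c * y) = c • s y := by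
  have hlift (y : ZMod p) : toZMod ((y * (π t)⁻¹).val : ℤ_[p]) = y * (π t)⁻¹ := by
    rw [map_natCast, ZMod.natCast_zmod_val]
  refine ⟨AddMonoidHom.mk' (fun y => ((y * (π t)⁻¹).val : ℤ_[p]) • t) fun y z => ?_,
    fun y => ?_, fun y => ?_, fun c y => ?_⟩
  · rw [← add_smul]
    exact smul_eq_smul_of_toZMod_eq hpt (by rw [map_add, hlift, hlift, hlift, add_mul])
  · rw [AddMonoidHom.mk'_apply, hπs, hlift, inv_mul_cancel_right₀ hπt]
  · rw [AddMonoidHom.mk'_apply, map_smul, hTt]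
  · simp only [AddMonoidHom.mk'_apply, ← mul_smul]
    exact smul_eq_smul_of_toZMod_eq hpt (by rw [map_mul, hlift, hlift, mul_assoc])

lemma eq_zero_of_fixed_of_nsmul_eq_zero (hι : Injective ι)
    (hπs : ∀ (c : ℤ_[p]) (x : M), π (c • x) = toZMod c * π x) (hexact : Exact ι π)
    (hnonsplit : ¬ ∃ s : ZMod p →+ M, (∀ y, π (s y) = y) ∧ (∀ y, T (s y) = s y) ∧
        (∀ (c : ℤ_[p]) (y : ZMod p), s (toZMod c * y) = c • s y))
    {x : M} (hTx : T x = x) (hpx : p • x = 0) : x = 0 := by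
  by_cases hπx : π x = 0
  · obtain ⟨d, rfl⟩ := (hexact x).mp hπx
    have hpd : p • d = 0 := hι (by rw [map_nsmul, hpx, map_zero])
    rw [(smul_eq_zero.mp hpd).resolve_left (Fact.out : p.Prime).ne_zero, map_zero]
  · exact (hnonsplit (exists_section_of_fixed_of_nsmul_eq_zero hπs hTx hpx hπx)).elim

lemma map_pow_apply_eq_of_map_apply_eq (hπe : ∀ x, π (T x) = π x) (k : ℕ) (x : M) :
    π ((T ^ k) x) = π x := by
  induction k with
  | zero => rfl
  | succ k ih => rw [pow_succ', Module.End.mul_apply, hπe, ih]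

lemma augSum_eq_zero_of_map_eq_sub (hT : T ^ p = 1) (hι : Injective ι)
    (hιe : ∀ x, ι (shiftEnd p x) = T (ι x)) {a : ZMod p → ℤ_[p]} {x : M}
    (h : ι a = T x - x) : augSum p a = 0 := by
  have hnorm : (∑ k ∈ range p, shiftEnd p ^ k) a = 0 := hι <| by
    rw [LinearMap.map_sum_pow_apply hιe, h, map_sub, ← Module.End.mul_apply,
      geom_sum_mul_eq_of_pow_eq_one hT, sub_self, map_zero]
  simpa [hnorm] using (congrFun (sum_shiftEnd_pow_apply a) 0).symm

lemma exists_fixed_map_eq_one (hT : T ^ p = 1) (hι : Injective ι)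
    (hιe : ∀ x, ι (shiftEnd p x) = T (ι x)) (hπ : Surjective π) (hπe : ∀ x, π (T x) = π x)
    (hexact : Exact ι π) : ∃ m, T m = m ∧ π m = 1 := by
  obtain ⟨m, hm⟩ := hπ 1
  obtain ⟨a, ha⟩ := (hexact (T m - m)).mp (by rw [map_sub, hπe, sub_self])
  obtain ⟨b, hb⟩ := augIdeal_le_range_shiftEnd_sub_one
    (LinearMap.mem_ker.mpr (augSum_eq_zero_of_map_eq_sub hT hι hιe ha))
  refine ⟨m - ι b, ?_, by rw [map_sub, hm, (hexact _).mpr ⟨b, rfl⟩, sub_zero]⟩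
  have hσb : shiftEnd p b = a + b := by
    rw [← hb, LinearMap.sub_apply, Module.End.one_apply, sub_add_cancel]
  rw [map_sub, ← hιe, hσb, map_add, ha]
  abel

lemma exists_fixed_nsmul_eq_map_one (hT : T ^ p = 1) (hι : Injective ι)
    (hιe : ∀ x, ι (shiftEnd p x) = T (ι x)) (hπ : Surjective π) (hπe : ∀ x, π (T x) = π x)
    (hπs : ∀ (c : ℤ_[p]) (x : M), π (c • x) = toZMod c * π x) (hexact : Exact ι π)
    (hnonsplit : ¬ ∃ s : ZMod p →+ M, (∀ y, π (s y) = y) ∧ (∀ y, T (s y) = s y) ∧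
        (∀ (c : ℤ_[p]) (y : ZMod p), s (toZMod c * y) = c • s y)) :
    ∃ m, T m = m ∧ p • m = ι 1 := by
  obtain ⟨m, hTm, hπm⟩ := exists_fixed_map_eq_one hT hι hιe hπ hπe hexact
  obtain ⟨c, hc⟩ := (hexact (p • m)).mp (by simp [hπm])
  have hσc : shiftEnd p c = c := hι (by rw [hιe, hc, map_nsmul, hTm])
  by_cases hunit : IsUnit (c 0)
  · obtain ⟨u, hu⟩ := hunit
    refine ⟨(↑u⁻¹ : ℤ_[p]) • m, by rw [map_smul, hTm], ?_⟩
    rw [smul_comm, ← hc, ← map_smul, eq_const_of_shiftEnd_eq hσc, ← hu]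
    congr 1
    funext
    simp
  · have hmem : c 0 ∈ Ideal.span {(p : ℤ_[p])} := by
      rw [← maximalIdeal_eq_span_p]
      exact hunit
    obtain ⟨μ, hμ⟩ := Ideal.mem_span_singleton'.mp hmem
    have ht : m - ι (fun _ => μ) = 0 := by
      refine eq_zero_of_fixed_of_nsmul_eq_zero hι hπs hexact hnonsplit
        (by rw [map_sub, hTm, ← hιe]; rfl) ?_
      rw [smul_sub, ← hc, ← map_nsmul, ← map_sub, eq_const_of_shiftEnd_eq hσc, ← hμ]
      convert map_zero ι
      funext
      simp [mul_comm]
    have hπt := congrArg π ht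
    rw [map_sub, hπm, (hexact _).mpr ⟨_, rfl⟩, sub_zero, map_zero] at hπt
    exact absurd hπt one_ne_zero

section Coordinates

variable {F G : M →ₗ[ℤ_[p]] (ZMod p → ℤ_[p])}

lemma eq_zero_of_coords_eq_zero (hT : T ^ p = 1) (hι : Injective ι)
    (hιe : ∀ x, ι (shiftEnd p x) = T (ι x))
    (hπs : ∀ (c : ℤ_[p]) (x : M), π (c • x) = toZMod c * π x) (hexact : Exact ι π)
    (hnonsplit : ¬ ∃ s : ZMod p →+ M, (∀ y, π (s y) = y) ∧ (∀ y, T (s y) = s y) ∧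
        (∀ (c : ℤ_[p]) (y : ZMod p), s (toZMod c * y) = c • s y))
    (hF : ∀ x, ι (F x) = (∑ k ∈ range p, T ^ k) x) (hG : ∀ x, ι (G x) = T x - x)
    {x : M} (hFx : F x 0 = 0) (hGx : G x = 0) : x = 0 := by
  have hTx : T x = x := by rw [← sub_eq_zero, ← hG, hGx, map_zero]
  have hσF : shiftEnd p (F x) = F x :=
    hι (by rw [hιe, hF, ← Module.End.mul_apply, mul_geom_sum_eq_of_pow_eq_one hT])
  have hF0 : F x = 0 := by rw [eq_const_of_shiftEnd_eq hσF, hFx]; rfl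
  refine eq_zero_of_fixed_of_nsmul_eq_zero hι hπs hexact hnonsplit hTx ?_
  rw [← Module.End.sum_pow_apply_of_apply_eq hTx, ← hF, hF0, map_zero]

lemma exists_coords_eq (hι : Injective ι) (hιe : ∀ x, ι (shiftEnd p x) = T (ι x))
    (hF : ∀ x, ι (F x) = (∑ k ∈ range p, T ^ k) x) (hG : ∀ x, ι (G x) = T x - x)
    {m : M} (hTm : T m = m) (hpm : p • m = ι 1) (c : ℤ_[p]) {a : ZMod p → ℤ_[p]}
    (ha : a ∈ augIdeal p) : ∃ x, F x 0 = c ∧ G x = a := by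
  obtain ⟨b, rfl⟩ := augIdeal_le_range_shiftEnd_sub_one ha
  have hFm : F m = 1 := hι (by rw [hF, Module.End.sum_pow_apply_of_apply_eq hTm, hpm])
  have hFb : F (ι b) = fun _ => augSum p b :=
    hι (by rw [hF, ← LinearMap.map_sum_pow_apply hιe, sum_shiftEnd_pow_apply])
  have hGm : G m = 0 := hι (by rw [hG, hTm, sub_self, map_zero])
  have hGb : G (ι b) = shiftEnd p b - b := hι (by rw [hG, map_sub, hιe])
  refine ⟨(c - augSum p b) • m + ι b, ?_, ?_⟩
  · simp [hFm, hFb]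
  · rw [map_add, map_smul, hGm, smul_zero, zero_add, hGb]
    rfl

lemma cyclicIso_of_coords (hT : T ^ p = 1) (TA : Module.End ℤ_[p] (augIdeal p))
    (hTA : ∀ x : augIdeal p, (TA x : ZMod p → ℤ_[p]) = shiftEnd p x) (hι : Injective ι)
    (hιe : ∀ x, ι (shiftEnd p x) = T (ι x))
    (hπs : ∀ (c : ℤ_[p]) (x : M), π (c • x) = toZMod c * π x) (hexact : Exact ι π)
    (hnonsplit : ¬ ∃ s : ZMod p →+ M, (∀ y, π (s y) = y) ∧ (∀ y, T (s y) = s y) ∧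
        (∀ (c : ℤ_[p]) (y : ZMod p), s (toZMod c * y) = c • s y))
    (hF : ∀ x, ι (F x) = (∑ k ∈ range p, T ^ k) x) (hG : ∀ x, ι (G x) = T x - x)
    {m : M} (hTm : T m = m) (hpm : p • m = ι 1) :
    CyclicIso ℤ_[p] T (LinearMap.prodMap (1 : Module.End ℤ_[p] ℤ_[p]) TA) := by
  let g : M →ₗ[ℤ_[p]] augIdeal p :=
    G.codRestrict _ fun x => LinearMap.mem_ker.mpr (augSum_eq_zero_of_map_eq_sub hT hι hιe (hG x))
  let e := (LinearMap.proj 0 ∘ₗ F).prod g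
  have he : Bijective e := by
    refine ⟨(injective_iff_map_eq_zero e).mpr fun x hx => ?_, fun ⟨c, a, ha⟩ => ?_⟩
    · exact eq_zero_of_coords_eq_zero hT hι hιe hπs hexact hnonsplit hF hG
        (congrArg Prod.fst hx) (congrArg (Subtype.val ∘ Prod.snd) hx)
    · obtain ⟨x, hFx, hGx⟩ := exists_coords_eq hι hιe hF hG hTm hpm c ha
      exact ⟨x, Prod.ext hFx (Subtype.ext hGx)⟩
  refine ⟨.ofBijective e he, fun x => Prod.ext ?_ (Subtype.ext ?_)⟩
  · have hFT : F (T x) = F x :=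
      hι (by rw [hF, hF, ← Module.End.mul_apply, geom_sum_mul_eq_of_pow_eq_one hT])
    exact congrFun hFT 0
  · show G (T x) = (TA (g x) : ZMod p → ℤ_[p])
    rw [hTA]
    exact hι (show ι (G (T x)) = ι (shiftEnd p (G x)) by rw [hιe, hG, hG, map_sub])

end Coordinates

end Extension

theorem stmt_8_general (p : ℕ) [Fact p.Prime]
    (M : Type) [AddCommGroup M] [Module ℤ_[p] M]
    (T : Module.End ℤ_[p] M) (hT : T ^ p = 1)
    -- the restriction of the shift to the augmentation kernel
    (TA : Module.End ℤ_[p] ↥(augIdeal p))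
    (hTA : ∀ x : ↥(augIdeal p), (TA x : ZMod p → ℤ_[p]) = shiftEnd p (x : ZMod p → ℤ_[p]))
    -- the extension 0 → ℤ_p[G] → M → ℤ/pℤ → 0
    (ι : (ZMod p → ℤ_[p]) →ₗ[ℤ_[p]] M) (hι : Function.Injective ι)
    (hιe : ∀ x, ι (shiftEnd p x) = T (ι x))
    (π : M →+ ZMod p) (hπ : Function.Surjective π)
    (hπe : ∀ x, π (T x) = π x)
    (hπs : ∀ (c : ℤ_[p]) (x : M), π (c • x) = PadicInt.toZMod c * π x)
    (hexact : Function.Exact ι π)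
    -- nonsplitness: no equivariant ℤ_p-semilinear additive section of π
    (hnonsplit : ¬ ∃ s : ZMod p →+ M, (∀ y, π (s y) = y) ∧ (∀ y, T (s y) = s y) ∧
        (∀ (c : ℤ_[p]) (y : ZMod p), s (PadicInt.toZMod c * y) = c • s y)) :
    CyclicIso ℤ_[p] T
      (LinearMap.prodMap (1 : Module.End ℤ_[p] ℤ_[p]) TA) := by
  obtain ⟨m, hTm, hpm⟩ := exists_fixed_nsmul_eq_map_one hT hι hιe hπ hπe hπs hexact hnonsplit
  obtain ⟨F, hF⟩ := LinearMap.exists_comp_eq_of_injective hι (∑ k ∈ range p, T ^ k) fun x =>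
    (hexact _).mp (by simp [LinearMap.sum_apply, map_pow_apply_eq_of_map_apply_eq hπe])
  obtain ⟨G, hG⟩ := LinearMap.exists_comp_eq_of_injective hι (T - 1) fun x =>
    (hexact _).mp (by simp [hπe])
  exact cyclicIso_of_coords hT TA hTA hι hιe hπs hexact hnonsplit hF hG hTm hpm

theorem stmt_8 (p : ℕ) [Fact p.Prime] (hp : Odd p)
    (M : Type) [AddCommGroup M] [Module ℤ_[p] M]
    (T : Module.End ℤ_[p] M) (hT : T ^ p = 1)
    -- the restriction of the shift to the augmentation kernel
    (TA : Module.End ℤ_[p] ↥(augIdeal p))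
    (hTA : ∀ x : ↥(augIdeal p), (TA x : ZMod p → ℤ_[p]) = shiftEnd p (x : ZMod p → ℤ_[p]))
    -- the extension 0 → ℤ_p[G] → M → ℤ/pℤ → 0
    (ι : (ZMod p → ℤ_[p]) →ₗ[ℤ_[p]] M) (hι : Function.Injective ι)
    (hιe : ∀ x, ι (shiftEnd p x) = T (ι x))
    (π : M →+ ZMod p) (hπ : Function.Surjective π)
    (hπe : ∀ x, π (T x) = π x)
    (hπs : ∀ (c : ℤ_[p]) (x : M), π (c • x) = PadicInt.toZMod c * π x)
    (hexact : Function.Exact ι π)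
    -- nonsplitness: no equivariant ℤ_p-semilinear additive section of π
    (hnonsplit : ¬ ∃ s : ZMod p →+ M, (∀ y, π (s y) = y) ∧ (∀ y, T (s y) = s y) ∧
        (∀ (c : ℤ_[p]) (y : ZMod p), s (PadicInt.toZMod c * y) = c • s y)) :
    CyclicIso ℤ_[p] T
      (LinearMap.prodMap (1 : Module.End ℤ_[p] ℤ_[p]) TA) :=
  stmt_8_general p M T hT TA hTA ι hι hιe π hπ hπe hπs hexact hnonsplit
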